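/- Let μ > 0 and λ > 0, and define for real symmetric 2×2 matrices Q with det Q > 0 the membrane energy density W_mem(Q) = (μ/2)·tr Q + (λ/4)·det Q − ((2μ+λ)/4)·log det Q − μ − λ/4. Then for every real symmetric 2×2 matrix A, the second derivative at t = 0 of the function t ↦ W_mem(I + t·A) equals (λ/2)·det A + ((2μ+λ)/4)·tr(A²), and this quantity is strictly positive whenever A ≠ 0; i.e., the second derivative of W_mem at the identity is a positive-definite quadratic form on symmetric matrices. -/

import Mathlib

/-!
Along the line `t ↦ 1 + t • A` one has `tr = 2 + t tr A` and `det = 1 + t tr A + t² det A`, so the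
density is an explicit quadratic polynomial in `t` minus `(2μ+λ)/4 · log (1 + t tr A + t² det A)`,
and its second derivative at `0` follows from `(log p)'' (0) = p''(0) - p'(0)²` (as `p 0 = 1`).
Cayley–Hamilton in dimension two, `tr (A²) = (tr A)² - 2 det A`, rewrites the result as
`(λ/4) (tr A)² + (μ/2) tr (A²)`, and for symmetric `A` the trace `tr (A²) = tr (A Aᵀ)` is the
squared Frobenius norm, positive unless `A = 0`.
-/

open Real Filter Topology

namespace Matrix

variable {R : Type*} [CommRing R]

theorem det_one_add_smul_fin_two (t : R) (A : Matrix (Fin 2) (Fin 2) R) :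
    (1 + t • A).det = 1 + A.trace * t + A.det * t ^ 2 := by
  simp only [det_fin_two, trace_fin_two, add_apply, smul_apply, one_apply_eq, smul_eq_mul,
    one_apply_ne (by decide : (0 : Fin 2) ≠ 1), one_apply_ne (by decide : (1 : Fin 2) ≠ 0)]
  ring

theorem trace_mul_self_fin_two (A : Matrix (Fin 2) (Fin 2) R) :
    (A * A).trace = A.trace ^ 2 - 2 * A.det := by
  simp only [trace_fin_two, det_fin_two, mul_apply, Fin.sum_univ_two]
  ring

theorem IsSymm.trace_mul_self_pos {n : Type*} [Fintype n] {A : Matrix n n ℝ} (hA : A.IsSymm)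
    (h : A ≠ 0) : 0 < (A * A).trace := by
  have hAA : A * A = A * Aᴴ := by rw [conjTranspose_eq_transpose_of_trivial, hA.eq]
  rw [hAA]
  exact (posSemidef_self_mul_conjTranspose A).trace_nonneg.lt_of_ne'
    (trace_mul_conjTranspose_self_eq_zero_iff.not.mpr h)

end Matrix

theorem iteratedDeriv_two_linear_add_quadratic (b d : ℝ) :
    iteratedDeriv 2 (fun t : ℝ => b * t + d * t ^ 2) 0 = 2 * d := by
  rw [iteratedDeriv_fun_add (by fun_prop) (by fun_prop), iteratedDeriv_const_mul_field,
    iteratedDeriv_const_mul_field, iteratedDeriv_fun_id_zero, iteratedDeriv_fun_pow_zero]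
  simp [mul_comm]

theorem iteratedDeriv_two_log_one_add_quadratic (b d : ℝ) :
    iteratedDeriv 2 (fun t => log (1 + b * t + d * t ^ 2)) 0 = 2 * d - b ^ 2 := by
  have hp (t : ℝ) : HasDerivAt (fun t => 1 + b * t + d * t ^ 2) (b + 2 * d * t) t := by
    refine ((((hasDerivAt_id t).const_mul b).const_add 1).fun_add
      ((hasDerivAt_pow 2 t).const_mul d)).congr_deriv ?_
    ring
  have hp_ne : ∀ᶠ t in 𝓝 (0 : ℝ), 1 + b * t + d * t ^ 2 ≠ 0 :=
    (Continuous.tendsto (by fun_prop) 0).eventually_ne (by norm_num)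
  have hderiv : deriv (fun t => log (1 + b * t + d * t ^ 2)) =ᶠ[𝓝 0]
      fun t => (b + 2 * d * t) / (1 + b * t + d * t ^ 2) :=
    hp_ne.mono fun t ht => ((hp t).log ht).deriv
  have hnum : HasDerivAt (fun t => b + 2 * d * t) (2 * d) 0 := by
    simpa using ((hasDerivAt_id (0 : ℝ)).const_mul (2 * d)).const_add b
  rw [iteratedDeriv_succ, iteratedDeriv_one, hderiv.deriv_eq,
    (hnum.fun_div (hp 0) (by simp)).deriv]
  ring

noncomputable def membraneDensity (μ lam : ℝ) (Q : Matrix (Fin 2) (Fin 2) ℝ) : ℝ :=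
  μ / 2 * Q.trace + lam / 4 * Q.det - (2 * μ + lam) / 4 * log Q.det - μ - lam / 4

noncomputable def membraneHessian (μ lam : ℝ) (A : Matrix (Fin 2) (Fin 2) ℝ) : ℝ :=
  lam / 2 * A.det + (2 * μ + lam) / 4 * (A * A).trace

section membrane

variable (μ lam : ℝ) (A : Matrix (Fin 2) (Fin 2) ℝ)

theorem membraneDensity_one_add_smul (t : ℝ) :
    membraneDensity μ lam (1 + t • A) =
      ((μ / 2 + lam / 4) * A.trace * t + lam / 4 * A.det * t ^ 2) -
        (2 * μ + lam) / 4 * log (1 + A.trace * t + A.det * t ^ 2) := by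
  simp only [membraneDensity, Matrix.trace_add, Matrix.trace_one, Matrix.trace_smul,
    Matrix.det_one_add_smul_fin_two, Fintype.card_fin, smul_eq_mul]
  push_cast
  ring

theorem iteratedDeriv_two_membraneDensity_one_add_smul :
    iteratedDeriv 2 (fun t : ℝ => membraneDensity μ lam (1 + t • A)) 0 =
      membraneHessian μ lam A := by
  simp only [membraneDensity_one_add_smul]
  rw [iteratedDeriv_fun_sub (by fun_prop) (by fun_prop (disch := norm_num)),
    iteratedDeriv_const_mul_field, iteratedDeriv_two_linear_add_quadratic,
    iteratedDeriv_two_log_one_add_quadratic, membraneHessian, Matrix.trace_mul_self_fin_two]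
  ring

theorem membraneHessian_eq :
    membraneHessian μ lam A = lam / 4 * A.trace ^ 2 + μ / 2 * (A * A).trace := by
  rw [membraneHessian, Matrix.trace_mul_self_fin_two]
  ring

variable {μ lam A}

theorem membraneHessian_pos (hμ : 0 < μ) (hlam : 0 ≤ lam) (hA : A.IsSymm) (h : A ≠ 0) :
    0 < membraneHessian μ lam A := by
  rw [membraneHessian_eq]
  exact add_pos_of_nonneg_of_pos (by positivity) (mul_pos (by positivity) (hA.trace_mul_self_pos h))

end membrane

/-- The second derivative of the membrane energy density at the identity in a
symmetric direction `A` equals `(λ/2) det A + ((2μ+λ)/4) tr(A²)`, and this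
quadratic form is positive definite on symmetric matrices. -/
theorem membrane_density_second_derivative_pos_def
    (μ lam : ℝ) (hμ : 0 < μ) (hlam : 0 < lam) :
    let W : Matrix (Fin 2) (Fin 2) ℝ → ℝ := fun Q =>
      μ / 2 * Q.trace + lam / 4 * Q.det -
        (2 * μ + lam) / 4 * Real.log Q.det - μ - lam / 4
    ∀ A : Matrix (Fin 2) (Fin 2) ℝ, A.IsSymm →
      iteratedDeriv 2 (fun t : ℝ => W (1 + t • A)) 0 =
          lam / 2 * A.det + (2 * μ + lam) / 4 * (A * A).trace ∧
        (A ≠ 0 → 0 < lam / 2 * A.det + (2 * μ + lam) / 4 * (A * A).trace) := by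
  intro W A hA
  exact ⟨iteratedDeriv_two_membraneDensity_one_add_smul μ lam A,
    membraneHessian_pos hμ hlam.le hA⟩
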